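/- Let G be a finite group and N a normal subgroup of G. For each prime p dividing |G| fix a Sylow p-subgroup P_p of G, and let Ind_p = { m ∈ ℕ : there exists a subgroup K of G with K ≤ P_p, K ∩ N = {e}, and m·|N∩P_p|·|K| = |P_p| }. Then the Knutson subindex 𝒦(G,N), the greatest common divisor of Ind(G,N), equals the product over the primes p dividing |G| of the greatest common divisors of the sets Ind_p; moreover each factor gcd(Ind_p) is independent of the choice of Sylow p-subgroup P_p. -/

import Mathlib

/-! Fix a prime `p` and a Sylow `p`-subgroup `P`. Since `N` is normal, `|N ⊓ P|` is the
`p`-part of `|N|`, and conjugating a Sylow `p`-subgroup of `K` into `P` turns a witness `K` for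
`m ∈ Ind(G,N)` into a witness for the `p`-part of `m` in `Ind_p`. Conversely a witness `K ≤ P`
for `Ind_p` embeds into `G ⧸ N`, so it is also a witness for some `m ∈ Ind(G,N)` whose `p`-part
is the given element. Thus `Ind_p` is the set of `p`-parts of `Ind(G,N)` whatever `P` is, and
the gcd of the `p`-parts is the `p`-part of the gcd. -/

/-- `Ind(G,N)`: the set of `m ∈ ℕ` such that there is a subgroup `K ≤ G` with
`K ∩ N = {e}` and `m·|N|·|K| = |G|`. -/
def knutsonInd {G : Type*} [Group G] (N : Subgroup G) : Set ℕ :=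
  {m | ∃ K : Subgroup G, K ⊓ N = ⊥ ∧ m * Nat.card N * Nat.card K = Nat.card G}

/-- `Ind_p` relative to a Sylow `p`-subgroup `P`: the set of `m ∈ ℕ` such that there
is a subgroup `K ≤ P` with `K ∩ N = {e}` and `m·|N∩P|·|K| = |P|`. -/
def knutsonIndSylow {G : Type*} [Group G] (N P : Subgroup G) : Set ℕ :=
  {m | ∃ K : Subgroup G, K ≤ P ∧ K ⊓ N = ⊥ ∧
    m * Nat.card (N ⊓ P : Subgroup G) * Nat.card K = Nat.card P}

/-- `d` is the greatest common divisor of the set `S ⊆ ℕ`: it divides every element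
of `S`, and every common divisor of `S` divides `d`. -/
def IsGCDOf (S : Set ℕ) (d : ℕ) : Prop :=
  (∀ m ∈ S, d ∣ m) ∧ ∀ c : ℕ, (∀ m ∈ S, c ∣ m) → c ∣ d

open Pointwise Subgroup

theorem IsGCDOf.unique {S : Set ℕ} {a b : ℕ} (ha : IsGCDOf S a) (hb : IsGCDOf S b) : a = b :=
  Nat.dvd_antisymm (hb.2 a ha.1) (ha.2 b hb.1)

theorem IsGCDOf.ordProj_image {S : Set ℕ} {d p : ℕ} (hd : IsGCDOf S d) (hp : p.Prime)
    (hS : S.Nonempty) (hS0 : 0 ∉ S) :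
    IsGCDOf ((fun m => ordProj[p] m) '' S) (ordProj[p] d) := by
  refine ⟨?_, ?_⟩
  · rintro _ ⟨m, hm, rfl⟩
    exact Nat.ordProj_dvd_ordProj_of_dvd (ne_of_mem_of_not_mem hm hS0) (hd.1 m hm) p
  · intro c hc
    obtain ⟨m₀, hm₀⟩ := hS
    obtain ⟨i, -, rfl⟩ := (Nat.dvd_prime_pow hp).1 (hc _ ⟨m₀, hm₀, rfl⟩)
    have hd0 : d ≠ 0 := by
      rintro rfl
      exact hS0 (Nat.eq_zero_of_zero_dvd (hd.1 m₀ hm₀) ▸ hm₀)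
    refine (hp.pow_dvd_iff_dvd_ordProj hd0).1 (hd.2 _ fun m hm => ?_)
    exact (hc _ ⟨m, hm, rfl⟩).trans (Nat.ordProj_dvd m p)

theorem Nat.prod_primeFactors_ordProj_of_dvd {m n : ℕ} (hn : n ≠ 0) (hmn : m ∣ n) :
    ∏ p ∈ n.primeFactors, ordProj[p] m = m := by
  have hm : m ≠ 0 := ne_zero_of_dvd_ne_zero hn hmn
  conv_rhs => rw [← Nat.prod_factorization_pow_eq_self hm]
  rw [Finsupp.prod_of_support_subset _ ?_ _ fun _ _ => pow_zero _]
  rw [Nat.support_factorization]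
  exact Nat.primeFactors_mono hmn hn

theorem Subgroup.card_smul {G : Type*} [Group G] (g : MulAut G) (K : Subgroup G) :
    Nat.card (g • K : Subgroup G) = Nat.card K :=
  (Nat.card_congr (equivSMul g K).toEquiv).symm

section Sylow

variable {G : Type*} [Group G] [Finite G] {p : ℕ} [Fact p.Prime]

theorem Sylow.exists_card_inf_eq_ordProj (H : Subgroup G) :
    ∃ Q : Sylow p G, Nat.card (Q ⊓ H : Subgroup G) = ordProj[p] (Nat.card H) := by
  obtain ⟨R⟩ := (Sylow.nonempty : Nonempty (Sylow p H))
  obtain ⟨Q, hQ⟩ := R.exists_comap_subtype_eq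
  refine ⟨Q, ?_⟩
  rw [← subgroupOf_map_subtype, card_map_of_injective H.subtype_injective,
    ← R.card_eq_multiplicity]
  exact congrArg (fun K : Subgroup H => Nat.card K) hQ

theorem Sylow.exists_card_inf_conj_eq_ordProj (P : Sylow p G) (H : Subgroup G) :
    ∃ g : G, Nat.card (P ⊓ MulAut.conj g • H : Subgroup G) = ordProj[p] (Nat.card H) := by
  obtain ⟨Q, hQ⟩ := Sylow.exists_card_inf_eq_ordProj (p := p) H
  obtain ⟨g, rfl⟩ := MulAction.exists_smul_eq G Q P
  exact ⟨g, by rw [Sylow.coe_subgroup_smul, ← smul_inf, card_smul, hQ]⟩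

theorem Sylow.card_normal_inf_eq_ordProj (P : Sylow p G) (N : Subgroup G) [N.Normal] :
    Nat.card (N ⊓ P : Subgroup G) = ordProj[p] (Nat.card N) := by
  obtain ⟨g, hg⟩ := P.exists_card_inf_conj_eq_ordProj N
  rwa [Normal.conj_smul_eq_self g N, inf_comm] at hg

end Sylow

section Knutson

variable {G : Type*} [Group G]

theorem index_mem_knutsonInd (N : Subgroup G) : N.index ∈ knutsonInd N :=
  ⟨⊥, bot_inf_eq _, by rw [card_bot, mul_one, index_mul_card]⟩

theorem card_mul_card_dvd_card_of_inf_eq_bot {N K : Subgroup G} [N.Normal] (h : K ⊓ N = ⊥) :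
    Nat.card N * Nat.card K ∣ Nat.card G := by
  have hinj : Function.Injective ((QuotientGroup.mk' N).comp K.subtype) := by
    rw [injective_iff_map_eq_one]
    intro k hk
    have hkN : (k : G) ∈ K ⊓ N := ⟨k.2, (QuotientGroup.eq_one_iff _).1 hk⟩
    rw [h, mem_bot] at hkN
    exact Subtype.ext hkN
  rw [card_eq_card_quotient_mul_card_subgroup N, mul_comm]
  exact mul_dvd_mul_right (card_dvd_of_injective _ hinj) _

variable [Finite G]

theorem zero_notMem_knutsonInd (N : Subgroup G) : 0 ∉ knutsonInd N := by
  rintro ⟨K, -, h⟩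
  exact Nat.card_pos.ne' (by rw [← h, zero_mul, zero_mul])

variable {p : ℕ} [Fact p.Prime]

theorem Sylow.ordProj_mul_card_inf_mul_ordProj_eq_card (P : Sylow p G) (N : Subgroup G) [N.Normal]
    {K : Subgroup G} {m : ℕ} (h : m * Nat.card N * Nat.card K = Nat.card G) :
    ordProj[p] m * Nat.card (N ⊓ P : Subgroup G) * ordProj[p] (Nat.card K) = Nat.card P := by
  have hm : m ≠ 0 := left_ne_zero_of_mul (left_ne_zero_of_mul (h ▸ Nat.card_pos.ne'))
  rw [P.card_normal_inf_eq_ordProj, P.card_eq_multiplicity, ← h,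
    Nat.ordProj_mul _ (mul_ne_zero hm Nat.card_pos.ne') Nat.card_pos.ne',
    Nat.ordProj_mul _ hm Nat.card_pos.ne']

theorem ordProj_mem_knutsonIndSylow (P : Sylow p G) {N : Subgroup G} [N.Normal] {m : ℕ}
    (hm : m ∈ knutsonInd N) : ordProj[p] m ∈ knutsonIndSylow N P := by
  obtain ⟨K, hKN, hm⟩ := hm
  obtain ⟨g, hg⟩ := P.exists_card_inf_conj_eq_ordProj K
  refine ⟨P ⊓ MulAut.conj g • K, inf_le_left, ?_, ?_⟩
  · rw [eq_bot_iff, ← smul_bot (MulAut.conj g), ← hKN, smul_inf, Normal.conj_smul_eq_self g N]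
    exact inf_le_inf_right N inf_le_right
  · rw [hg]
    exact P.ordProj_mul_card_inf_mul_ordProj_eq_card N hm

theorem exists_mem_knutsonInd_ordProj_eq (P : Sylow p G) {N : Subgroup G} [N.Normal] {m : ℕ}
    (hm : m ∈ knutsonIndSylow N P) : ∃ m' ∈ knutsonInd N, ordProj[p] m' = m := by
  obtain ⟨K, hKP, hKN, hm⟩ := hm
  obtain ⟨m', hm'⟩ := card_mul_card_dvd_card_of_inf_eq_bot hKN
  have hm'K : m' * Nat.card N * Nat.card K = Nat.card G := by rw [hm']; ring
  refine ⟨m', ⟨K, hKN, hm'K⟩, ?_⟩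
  have hKp : ordProj[p] (Nat.card K) = Nat.card K := by
    obtain ⟨k, hk⟩ := (P.isPGroup'.to_le hKP).exists_card_eq
    rw [hk, Nat.ordProj_self_pow Fact.out]
  have hP := P.ordProj_mul_card_inf_mul_ordProj_eq_card N hm'K
  rw [hKp, ← hm, mul_assoc, mul_assoc] at hP
  exact Nat.eq_of_mul_eq_mul_right (mul_pos Nat.card_pos Nat.card_pos) hP

theorem knutsonIndSylow_eq_image_ordProj (P : Sylow p G) (N : Subgroup G) [N.Normal] :
    knutsonIndSylow N P = (fun m => ordProj[p] m) '' knutsonInd N := by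
  ext m
  refine ⟨exists_mem_knutsonInd_ordProj_eq P, ?_⟩
  rintro ⟨m, hm, rfl⟩
  exact ordProj_mem_knutsonIndSylow P hm

end Knutson

/-- Let `G` be a finite group, `N ⊴ G`. Fixing a Sylow
`p`-subgroup `P p` for each prime `p` dividing `|G|`, the Knutson subindex
`𝒦(G,N) = gcd(Ind(G,N))` equals `∏_p gcd(Ind_p)`, and each factor `gcd(Ind_p)` is
independent of the choice of Sylow `p`-subgroup. -/
theorem knutson_subindex_eq_prod_of_sylow {G : Type*} [Group G] [Finite G]
    (N : Subgroup G) [N.Normal]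
    (P : ∀ p : ℕ, Sylow p G) (k : ℕ → ℕ)
    (hk : ∀ p ∈ (Nat.card G).primeFactors,
      IsGCDOf (knutsonIndSylow N (P p : Subgroup G)) (k p))
    (d : ℕ) (hd : IsGCDOf (knutsonInd N) d) :
    (d = ∏ p ∈ (Nat.card G).primeFactors, k p) ∧
      ∀ p ∈ (Nat.card G).primeFactors, ∀ P₁ P₂ : Sylow p G, ∀ a b : ℕ,
        IsGCDOf (knutsonIndSylow N (P₁ : Subgroup G)) a →
        IsGCDOf (knutsonIndSylow N (P₂ : Subgroup G)) b → a = b := by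
  have hpart : ∀ p ∈ (Nat.card G).primeFactors, ∀ (Q : Sylow p G) (a : ℕ),
      IsGCDOf (knutsonIndSylow N (Q : Subgroup G)) a → a = ordProj[p] d := by
    intro p hpG Q a ha
    have hp : p.Prime := Nat.prime_of_mem_primeFactors hpG
    have := Fact.mk hp
    rw [knutsonIndSylow_eq_image_ordProj] at ha
    exact ha.unique (hd.ordProj_image hp ⟨_, index_mem_knutsonInd N⟩ (zero_notMem_knutsonInd N))
  refine ⟨?_, fun p hp P₁ P₂ a b ha hb =>
    (hpart p hp P₁ a ha).trans (hpart p hp P₂ b hb).symm⟩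
  have hdG : d ∣ Nat.card G := (hd.1 _ (index_mem_knutsonInd N)).trans N.index_dvd_card
  rw [Finset.prod_congr rfl fun p hp => hpart p hp (P p) (k p) (hk p hp)]
  exact (Nat.prod_primeFactors_ordProj_of_dvd Nat.card_pos.ne' hdG).symm
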